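/- Assume k₁² ≠ k₂² and the characteristic relations k₁² + k₂² = q(1+ε) + k_p² and k₁² k₂² = q k_p², where ε := γηκ/(λ+2μ). Fix y ∈ ℝ³ and set u(x) := E₁₂(x,y) and p(x) := E₂₂(x,y). Then for every x ≠ y, the Biot system holds: μΔu(x) + (λ+μ)∇(∇·u(x)) + ρω²u(x) − γ∇p(x) = 0 and Δp(x) + q p(x) + iωη ∇·u(x) = 0. -/

import Mathlib

noncomputable section

open scoped BigOperators

/-- Three-dimensional Euclidean space. -/
abbrev V3 : Type := EuclideanSpace ℝ (Fin 3)

/-- Partial derivative in the `i`-th coordinate direction. -/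
def pd (i : Fin 3) (f : V3 → ℂ) : V3 → ℂ :=
  fun x => fderiv ℝ f x (EuclideanSpace.single i (1 : ℝ))

/-- Laplacian. -/
def lap (f : V3 → ℂ) : V3 → ℂ := fun x => ∑ i, pd i (pd i f) x

/-- Directional derivative `ν·∇` along the constant vector `ν`. -/
def dirD (ν : Fin 3 → ℝ) (f : V3 → ℂ) : V3 → ℂ :=
  fun x => ∑ i, (ν i : ℂ) * pd i f x

/-- Divergence of a vector field. -/
def vdiv (v : Fin 3 → V3 → ℂ) : V3 → ℂ := fun x => ∑ i, pd i (v i) x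

/-- Levi–Civita symbol on `Fin 3`. -/
def eps (i j k : Fin 3) : ℝ :=
  if (i, j, k) = (0, 1, 2) ∨ (i, j, k) = (1, 2, 0) ∨ (i, j, k) = (2, 0, 1) then 1
  else if (i, j, k) = (0, 2, 1) ∨ (i, j, k) = (2, 1, 0) ∨ (i, j, k) = (1, 0, 2) then -1
  else 0

/-- Curl of a vector field: `(curl v)_i = Σ_{l,m} ε_{ilm} ∂_l v_m`. -/
def curl (v : Fin 3 → V3 → ℂ) : Fin 3 → V3 → ℂ :=
  fun i x => ∑ l, ∑ m, (eps i l m : ℂ) * pd l (v m) x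

/-- Cross product of a constant real vector with a complex vector. -/
def crossR (ν : Fin 3 → ℝ) (w : Fin 3 → ℂ) : Fin 3 → ℂ :=
  fun i => ∑ l, ∑ m, (eps i l m : ℂ) * (ν l : ℂ) * w m

/-- Günter derivative `M(∂,ν)` acting on a vector field,
with entries `m^{ij}(∂,ν) = ν^j ∂_i − ν^i ∂_j`. -/
def gunterM (ν : Fin 3 → ℝ) (v : Fin 3 → V3 → ℂ) : Fin 3 → V3 → ℂ :=
  fun i x => ∑ j, ((ν j : ℂ) * pd i (v j) x - (ν i : ℂ) * pd j (v j) x)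

/-- Traction operator `T(∂,ν)v = 2μ ∂_ν v + λ ν (∇·v) + μ ν × curl v`. -/
def traction (lam μ : ℝ) (ν : Fin 3 → ℝ) (v : Fin 3 → V3 → ℂ) : Fin 3 → V3 → ℂ :=
  fun i x => 2 * (μ : ℂ) * dirD ν (v i) x + (lam : ℂ) * (ν i : ℂ) * vdiv v x
    + (μ : ℂ) * crossR ν (fun m => curl v m x) i

/-- Helmholtz fundamental solution `γ_k(x,y) = exp(i k |x−y|)/(4π|x−y|)`. -/
def gammaK (k : ℂ) (x y : V3) : ℂ :=
  Complex.exp (Complex.I * k * (‖x - y‖ : ℂ)) / ((4 * Real.pi * ‖x - y‖ : ℝ) : ℂ)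

/-- Kupradze tensor entry `E(x,y)_{ij}`:
`E = (1/μ)γ_{k_s} I + (1/(ρω²)) ∇_x∇_x^⊤[γ_{k_s} − γ_{k_p}]`. -/
def kupE (μ ρ ω : ℝ) (ks kp : ℂ) (i j : Fin 3) (x y : V3) : ℂ :=
  (1 / (μ : ℂ)) * gammaK ks x y * (if i = j then 1 else 0)
    + (1 / ((ρ : ℂ) * (ω : ℂ) ^ 2)) *
      pd i (pd j (fun w => gammaK ks w y - gammaK kp w y)) x

/-- Thermoelastic fundamental-solution block `E₁₁`, entry `(i,j)`. -/
def E11 (μ ρ ω : ℝ) (ks kp k1 k2 : ℂ) (i j : Fin 3) (x y : V3) : ℂ :=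
  (1 / (μ : ℂ)) * gammaK ks x y * (if i = j then 1 else 0)
    + (1 / ((ρ : ℂ) * (ω : ℂ) ^ 2)) *
      pd i (pd j (fun w => gammaK ks w y - gammaK k1 w y)) x
    - (1 / ((ρ : ℂ) * (ω : ℂ) ^ 2)) * ((kp ^ 2 - k1 ^ 2) / (k1 ^ 2 - k2 ^ 2)) *
      pd i (pd j (fun w => gammaK k1 w y - gammaK k2 w y)) x

/-- Thermoelastic fundamental-solution block `E₁₂`, component `j`. -/
def E12 (lam μ gam : ℝ) (k1 k2 : ℂ) (j : Fin 3) (x y : V3) : ℂ :=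
  -((gam : ℂ) / ((k1 ^ 2 - k2 ^ 2) * ((lam : ℂ) + 2 * (μ : ℂ)))) *
    pd j (fun w => gammaK k1 w y - gammaK k2 w y) x

/-- Thermoelastic fundamental-solution block `E₂₁`, component `j`. -/
def E21 (lam μ ω η : ℝ) (k1 k2 : ℂ) (j : Fin 3) (x y : V3) : ℂ :=
  (Complex.I * (ω : ℂ) * (η : ℂ) / ((k1 ^ 2 - k2 ^ 2) * ((lam : ℂ) + 2 * (μ : ℂ)))) *
    pd j (fun w => gammaK k1 w y - gammaK k2 w y) x

/-- Thermoelastic fundamental-solution block `E₂₂`. -/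
def E22 (kp k1 k2 : ℂ) (x y : V3) : ℂ :=
  -(1 / (k1 ^ 2 - k2 ^ 2)) *
    ((kp ^ 2 - k1 ^ 2) * gammaK k1 x y - (kp ^ 2 - k2 ^ 2) * gammaK k2 x y)


section AuxHelmholtz
open Complex

lemma norm_sub_ne (z y : V3) (h : z ≠ y) : ‖z - y‖ ≠ 0 :=
  norm_ne_zero_iff.mpr (sub_ne_zero.mpr h)

lemma hasFDerivAt_normsub (y x : V3) (hxy : x ≠ y) :
    HasFDerivAt (fun z : V3 => ‖z - y‖) (‖x - y‖⁻¹ • innerSL ℝ (x - y)) x := by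
  have hne : x - y ≠ 0 := sub_ne_zero.mpr hxy
  have hr : ‖x - y‖ ≠ 0 := norm_ne_zero_iff.mpr hne
  have hsq : HasFDerivAt (fun z : V3 => ‖z - y‖ ^ 2)
      (2 • (innerSL ℝ (x - y)).comp (ContinuousLinearMap.id ℝ V3)) x :=
    ((hasFDerivAt_id x).sub_const y).norm_sq
  have hs : (‖x - y‖ : ℝ) ^ 2 ≠ 0 := pow_ne_zero _ hr
  have h2 := (Real.hasDerivAt_sqrt hs).comp_hasFDerivAt x hsq
  have heq : (fun z : V3 => Real.sqrt (‖z - y‖ ^ 2)) = fun z : V3 => ‖z - y‖ := by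
    funext z; rw [Real.sqrt_sq (norm_nonneg _)]
  rw [Function.comp_def, heq] at h2
  refine h2.congr_fderiv ?_
  ext v
  simp only [ContinuousLinearMap.smul_apply, ContinuousLinearMap.coe_smul', Pi.smul_apply,
    ContinuousLinearMap.coe_comp', Function.comp_apply, ContinuousLinearMap.coe_id', id_eq,
    Real.sqrt_sq (norm_nonneg (x - y)), smul_eq_mul, nsmul_eq_mul]
  field_simp
  ring

lemma inner_single (v : V3) (i : Fin 3) :
    (innerSL ℝ v) (EuclideanSpace.single i (1:ℝ)) = v i := by
  simp [EuclideanSpace.inner_single_right]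

lemma hasFDerivAt_radial (y x : V3) (hxy : x ≠ y) {Ψ : ℝ → ℂ} {Ψv : ℂ}
    (h : HasDerivAt Ψ Ψv ‖x - y‖) :
    HasFDerivAt (fun z : V3 => Ψ ‖z - y‖)
      (((‖x - y‖⁻¹ • innerSL ℝ (x - y)).smulRight Ψv)) x := by
  have h2 := (hasDerivAt_iff_hasFDerivAt.mp h).comp x (hasFDerivAt_normsub y x hxy)
  exact h2

lemma pd_radial (y x : V3) (hxy : x ≠ y) {Ψ : ℝ → ℂ} {Ψv : ℂ}
    (h : HasDerivAt Ψ Ψv ‖x - y‖) (i : Fin 3) :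
    pd i (fun z : V3 => Ψ ‖z - y‖) x = Ψv * (((x i - y i) / ‖x - y‖ : ℝ) : ℂ) := by
  have h2 := hasFDerivAt_radial y x hxy h
  rw [pd, h2.fderiv]
  simp [inner_single, mul_comm, div_eq_inv_mul]

lemma hasFDerivAt_coord (y : V3) (x : V3) (j : Fin 3) :
    HasFDerivAt (fun z : V3 => ((z j - y j : ℝ) : ℂ))
      (Complex.ofRealCLM.comp ((EuclideanSpace.proj j : V3 →L[ℝ] ℝ))) x := by
  have h : HasFDerivAt (fun z : V3 => z j - y j) (EuclideanSpace.proj j : V3 →L[ℝ] ℝ) x := by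
    simpa using ((EuclideanSpace.proj j : V3 →L[ℝ] ℝ).hasFDerivAt (x := x)).sub_const (y j)
  exact (Complex.ofRealCLM.hasFDerivAt).comp x h

lemma pd_radial_mul (y x : V3) (hxy : x ≠ y) {Ψ : ℝ → ℂ} {Ψv : ℂ}
    (h : HasDerivAt Ψ Ψv ‖x - y‖) (i j : Fin 3) :
    pd i (fun z : V3 => Ψ ‖z - y‖ * ((z j - y j : ℝ) : ℂ)) x
      = Ψv * (((x i - y i) / ‖x - y‖ : ℝ) : ℂ) * ((x j - y j : ℝ) : ℂ)
        + (if i = j then 1 else 0) * Ψ ‖x - y‖ := by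
  have h2 := (hasFDerivAt_radial y x hxy h).fun_mul (hasFDerivAt_coord y x j)
  rw [pd, h2.fderiv]
  simp [inner_single, EuclideanSpace.single_apply, mul_comm,
    div_eq_inv_mul, eq_comm]
  split_ifs <;> push_cast <;> ring

lemma pd_radial_mul2 (y x : V3) (hxy : x ≠ y) {Ψ : ℝ → ℂ} {Ψv : ℂ}
    (h : HasDerivAt Ψ Ψv ‖x - y‖) (i l m : Fin 3) :
    pd i (fun z : V3 => Ψ ‖z - y‖ * ((z l - y l : ℝ) : ℂ) * ((z m - y m : ℝ) : ℂ)) x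
      = Ψv * (((x i - y i) / ‖x - y‖ : ℝ) : ℂ) * ((x l - y l : ℝ) : ℂ) * ((x m - y m : ℝ) : ℂ)
        + Ψ ‖x - y‖ * ((if i = l then 1 else 0) * ((x m - y m : ℝ) : ℂ)
            + (if i = m then 1 else 0) * ((x l - y l : ℝ) : ℂ)) := by
  have h2 := ((hasFDerivAt_radial y x hxy h).fun_mul (hasFDerivAt_coord y x l)).fun_mul
      (hasFDerivAt_coord y x m)
  rw [pd, h2.fderiv]
  simp [inner_single, EuclideanSpace.single_apply, mul_comm,
    div_eq_inv_mul, eq_comm]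
  split_ifs <;> push_cast <;> ring
lemma pd_radial' (y x : V3) (hxy : x ≠ y) {Ψ : ℝ → ℂ} {W : ℂ}
    (h : HasDerivAt Ψ (((‖x - y‖ : ℝ) : ℂ) * W) ‖x - y‖) (i : Fin 3) :
    pd i (fun z : V3 => Ψ ‖z - y‖) x = W * ((x i - y i : ℝ) : ℂ) := by
  have hr : ‖x - y‖ ≠ 0 := norm_sub_ne x y hxy
  have hrC : ((‖x - y‖ : ℝ) : ℂ) ≠ 0 := Complex.ofReal_ne_zero.mpr hr
  rw [pd_radial y x hxy h i]
  push_cast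
  field_simp



def FF (k : ℂ) (t : ℝ) : ℂ := Complex.exp (Complex.I * k * t) / (4 * (Real.pi : ℂ) * t)
def AA (k : ℂ) (t : ℝ) : ℂ :=
  Complex.exp (Complex.I * k * t) * (Complex.I * k * t - 1) / (4 * (Real.pi : ℂ) * t ^ 3)
def BB (k : ℂ) (t : ℝ) : ℂ :=
  Complex.exp (Complex.I * k * t) * (-(k ^ 2) * t ^ 2 - 3 * Complex.I * k * t + 3)
    / (4 * (Real.pi : ℂ) * t ^ 5)
def BBd (k : ℂ) (t : ℝ) : ℂ :=
  Complex.exp (Complex.I * k * t) *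
    (-(Complex.I * k ^ 3 * t ^ 3) + k ^ 2 * t ^ 2 + 5 * (k ^ 2) * t ^ 2 + 15 * Complex.I * k * t - 15)
    / (4 * (Real.pi : ℂ) * t ^ 6)

lemma hasDerivAt_ofRealC (t : ℝ) : HasDerivAt (fun s : ℝ => (s : ℂ)) 1 t := by
  simpa using (hasDerivAt_id t).ofReal_comp

lemma hasDerivAt_cexp_lin (k : ℂ) (t : ℝ) :
    HasDerivAt (fun s : ℝ => Complex.exp (Complex.I * k * s))
      (Complex.I * k * Complex.exp (Complex.I * k * t)) t := by
  have h1 : HasDerivAt (fun s : ℝ => Complex.I * k * (s : ℂ)) (Complex.I * k) t := by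
    simpa using (hasDerivAt_ofRealC t).const_mul (Complex.I * k)
  simpa [mul_comm] using h1.cexp

lemma pi4_ne : (4 * (Real.pi : ℂ)) ≠ 0 := by
  simp [Real.pi_ne_zero]

lemma piC_ne : ((Real.pi : ℝ) : ℂ) ≠ 0 := by
  simp [Real.pi_ne_zero]

lemma hasDerivAt_ofReal_pow (n : ℕ) (t : ℝ) :
    HasDerivAt (fun s : ℝ => (s : ℂ) ^ n) (n * (t : ℂ) ^ (n - 1)) t := by
  simpa [Function.comp_def] using (hasDerivAt_pow n ((t : ℝ) : ℂ)).scomp t (hasDerivAt_ofRealC t)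

lemma hFF (k : ℂ) (t : ℝ) (ht : t ≠ 0) : HasDerivAt (FF k) ((t : ℂ) * AA k t) t := by
  have htC : (t : ℂ) ≠ 0 := Complex.ofReal_ne_zero.mpr ht
  have hden : HasDerivAt (fun s : ℝ => 4 * (Real.pi : ℂ) * s) (4 * (Real.pi : ℂ)) t := by
    simpa using (hasDerivAt_ofRealC t).const_mul (4 * (Real.pi : ℂ))
  have h := (hasDerivAt_cexp_lin k t).div hden (by simp [Real.pi_ne_zero, htC])
  refine h.congr_deriv ?_
  unfold AA
  field_simp [htC, piC_ne]

lemma hAA (k : ℂ) (t : ℝ) (ht : t ≠ 0) : HasDerivAt (AA k) ((t : ℂ) * BB k t) t := by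
  have htC : (t : ℂ) ≠ 0 := Complex.ofReal_ne_zero.mpr ht
  have hnum : HasDerivAt (fun s : ℝ => Complex.exp (Complex.I * k * s) * (Complex.I * k * s - 1))
      (Complex.I * k * Complex.exp (Complex.I * k * t) * (Complex.I * k * t - 1)
        + Complex.exp (Complex.I * k * t) * (Complex.I * k)) t := by
    have h2 : HasDerivAt (fun s : ℝ => Complex.I * k * (s : ℂ) - 1) (Complex.I * k) t := by
      simpa using ((hasDerivAt_ofRealC t).const_mul (Complex.I * k)).sub_const 1
    exact (hasDerivAt_cexp_lin k t).mul h2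
  have hden : HasDerivAt (fun s : ℝ => 4 * (Real.pi : ℂ) * (s : ℂ) ^ 3)
      (4 * (Real.pi : ℂ) * (3 * (t : ℂ) ^ 2)) t := by
    simpa [mul_assoc] using ((hasDerivAt_ofReal_pow 3 t).const_mul (4 * (Real.pi : ℂ)))
  have h := hnum.div hden (by simp [Real.pi_ne_zero, htC])
  refine h.congr_deriv ?_
  unfold BB
  field_simp [htC, piC_ne]
  ring_nf
  simp only [Complex.I_sq]
  ring

lemma hBB (k : ℂ) (t : ℝ) (ht : t ≠ 0) : HasDerivAt (BB k) (BBd k t) t := by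
  have htC : (t : ℂ) ≠ 0 := Complex.ofReal_ne_zero.mpr ht
  have hp : HasDerivAt (fun s : ℝ => -(k ^ 2) * (s : ℂ) ^ 2 - 3 * Complex.I * k * s + 3)
      (-(k ^ 2) * (2 * (t : ℂ)) - 3 * Complex.I * k) t := by
    have h1 := (hasDerivAt_ofReal_pow 2 t).const_mul (-(k ^ 2))
    have h2 := (hasDerivAt_ofRealC t).const_mul (3 * Complex.I * k)
    simpa [mul_assoc] using (h1.sub h2).add_const 3
  have hnum := (hasDerivAt_cexp_lin k t).fun_mul hp
  have hden : HasDerivAt (fun s : ℝ => 4 * (Real.pi : ℂ) * (s : ℂ) ^ 5)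
      (4 * (Real.pi : ℂ) * (5 * (t : ℂ) ^ 4)) t := by
    simpa [mul_assoc] using ((hasDerivAt_ofReal_pow 5 t).const_mul (4 * (Real.pi : ℂ)))
  have h := hnum.div hden (by simp [Real.pi_ne_zero, htC])
  refine h.congr_deriv ?_
  unfold BBd
  field_simp [htC, piC_ne]
  ring_nf
  simp only [Complex.I_sq]
  ring

lemma id1 (k : ℂ) (t : ℝ) (ht : t ≠ 0) :
    (t : ℂ) ^ 2 * BB k t + 3 * AA k t = -(k ^ 2) * FF k t := by
  have htC : (t : ℂ) ≠ 0 := Complex.ofReal_ne_zero.mpr ht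
  unfold AA BB FF
  field_simp [htC, piC_ne]
  ring

lemma id2 (k : ℂ) (t : ℝ) (ht : t ≠ 0) :
    BBd k t * t + 5 * BB k t = -(k ^ 2) * AA k t := by
  have htC : (t : ℂ) ≠ 0 := Complex.ofReal_ne_zero.mpr ht
  unfold AA BB BBd
  field_simp [htC, piC_ne]
  ring

lemma pd_congr (i : Fin 3) {f g : V3 → ℂ} {x : V3} {s : Set V3} (hs : IsOpen s) (hx : x ∈ s)
    (h : ∀ z ∈ s, f z = g z) : pd i f x = pd i g x := by
  unfold pd
  rw [Filter.EventuallyEq.fderiv_eq (Filter.eventuallyEq_of_mem (hs.mem_nhds hx) h)]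

lemma pd_add (i : Fin 3) {f g : V3 → ℂ} {x : V3} (hf : DifferentiableAt ℝ f x)
    (hg : DifferentiableAt ℝ g x) :
    pd i (fun z => f z + g z) x = pd i f x + pd i g x := by
  unfold pd
  rw [fderiv_fun_add hf hg]
  simp

lemma sum_sq (x y : V3) :
    ∑ l : Fin 3, ((x l - y l : ℝ) : ℂ) * ((x l - y l : ℝ) : ℂ) = ((‖x - y‖ : ℝ) : ℂ) ^ 2 := by
  have hr : ∑ l : Fin 3, (x l - y l) * (x l - y l) = ‖x - y‖ ^ 2 := by
    rw [EuclideanSpace.norm_eq, Real.sq_sqrt (by positivity)]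
    apply Finset.sum_congr rfl
    intro l _
    simp [Real.norm_eq_abs, sq_abs, sq]
  calc ∑ l : Fin 3, ((x l - y l : ℝ) : ℂ) * ((x l - y l : ℝ) : ℂ)
      = ((∑ l : Fin 3, (x l - y l) * (x l - y l) : ℝ) : ℂ) := by push_cast; ring
    _ = ((‖x - y‖ : ℝ) : ℂ) ^ 2 := by rw [hr]; push_cast; ring


lemma lap_congr {f g : V3 → ℂ} {x : V3} {s : Set V3} (hs : IsOpen s) (hx : x ∈ s)
    (h : ∀ z ∈ s, f z = g z) : lap f x = lap g x := by
  unfold lap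
  apply Finset.sum_congr rfl
  intro l _
  exact pd_congr l hs hx fun z hz => pd_congr l hs hz h


lemma lap_radial (y x : V3) (hxy : x ≠ y) (Ψ Ψ' : ℝ → ℂ) (Ψ'' : ℂ)
    (h1 : ∀ t : ℝ, t ≠ 0 → HasDerivAt Ψ ((t : ℂ) * Ψ' t) t)
    (h2 : HasDerivAt Ψ' Ψ'' ‖x - y‖) :
    lap (fun z => Ψ ‖z - y‖) x = Ψ'' * ((‖x - y‖ : ℝ) : ℂ) + 3 * Ψ' ‖x - y‖ := by
  have hr : ‖x - y‖ ≠ 0 := norm_sub_ne x y hxy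
  have hrC : ((‖x - y‖ : ℝ) : ℂ) ≠ 0 := Complex.ofReal_ne_zero.mpr hr
  have key : ∀ l : Fin 3, pd l (pd l (fun z => Ψ ‖z - y‖)) x
      = (Ψ'' * ((‖x - y‖ : ℝ) : ℂ)⁻¹) * (((x l - y l : ℝ) : ℂ) * ((x l - y l : ℝ) : ℂ))
        + Ψ' ‖x - y‖ := by
    intro l
    have congr1 : pd l (pd l (fun z => Ψ ‖z - y‖)) x
        = pd l (fun z => Ψ' ‖z - y‖ * ((z l - y l : ℝ) : ℂ)) x := by
      apply pd_congr l isOpen_compl_singleton (by simpa using hxy)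
      intro z hz
      have hz' : z ≠ y := by simpa using hz
      have hnz : ‖z - y‖ ≠ 0 := norm_sub_ne z y hz'
      have hnzC : ((‖z - y‖ : ℝ) : ℂ) ≠ 0 := Complex.ofReal_ne_zero.mpr hnz
      rw [pd_radial y z hz' (h1 _ hnz) l]
      push_cast
      field_simp
    rw [congr1, pd_radial_mul y x hxy h2 l l]
    rw [if_pos rfl]
    push_cast
    field_simp
  rw [lap]
  rw [Finset.sum_congr rfl (fun l _ => key l), Finset.sum_add_distrib, ← Finset.mul_sum, sum_sq]
  simp only [Finset.sum_const, Finset.card_univ, Fintype.card_fin, nsmul_eq_mul]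
  field_simp
  ring

lemma lap_radial_mul (y x : V3) (hxy : x ≠ y) (Ψ Ψ' : ℝ → ℂ) (Ψ'' : ℂ) (i : Fin 3)
    (h1 : ∀ t : ℝ, t ≠ 0 → HasDerivAt Ψ ((t : ℂ) * Ψ' t) t)
    (h2 : HasDerivAt Ψ' Ψ'' ‖x - y‖) :
    lap (fun z => Ψ ‖z - y‖ * ((z i - y i : ℝ) : ℂ)) x
      = (Ψ'' * ((‖x - y‖ : ℝ) : ℂ) + 5 * Ψ' ‖x - y‖) * ((x i - y i : ℝ) : ℂ) := by
  have hr : ‖x - y‖ ≠ 0 := norm_sub_ne x y hxy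
  have hrC : ((‖x - y‖ : ℝ) : ℂ) ≠ 0 := Complex.ofReal_ne_zero.mpr hr
  have key : ∀ l : Fin 3, pd l (pd l (fun z => Ψ ‖z - y‖ * ((z i - y i : ℝ) : ℂ))) x
      = (Ψ'' * ((‖x - y‖ : ℝ) : ℂ)⁻¹ * ((x i - y i : ℝ) : ℂ))
          * (((x l - y l : ℝ) : ℂ) * ((x l - y l : ℝ) : ℂ))
        + Ψ' ‖x - y‖ * ((x i - y i : ℝ) : ℂ)
        + (if l = i then 1 else 0) * (2 * Ψ' ‖x - y‖ * ((x l - y l : ℝ) : ℂ)) := by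
    intro l
    have congr1 : pd l (pd l (fun z => Ψ ‖z - y‖ * ((z i - y i : ℝ) : ℂ))) x
        = pd l (fun z => Ψ' ‖z - y‖ * ((z l - y l : ℝ) : ℂ) * ((z i - y i : ℝ) : ℂ)
            + (if l = i then 1 else 0) * Ψ ‖z - y‖) x := by
      apply pd_congr l isOpen_compl_singleton (by simpa using hxy)
      intro z hz
      have hz' : z ≠ y := by simpa using hz
      have hnz : ‖z - y‖ ≠ 0 := norm_sub_ne z y hz'
      have hnzC : ((‖z - y‖ : ℝ) : ℂ) ≠ 0 := Complex.ofReal_ne_zero.mpr hnz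
      rw [pd_radial_mul y z hz' (h1 _ hnz) l i]
      push_cast
      split_ifs <;> field_simp <;> ring
    rw [congr1]
    have hd1 : DifferentiableAt ℝ
        (fun z : V3 => Ψ' ‖z - y‖ * ((z l - y l : ℝ) : ℂ) * ((z i - y i : ℝ) : ℂ)) x :=
      (((hasFDerivAt_radial y x hxy h2).mul (hasFDerivAt_coord y x l)).mul
        (hasFDerivAt_coord y x i)).differentiableAt
    have hd2 : DifferentiableAt ℝ
        (fun z : V3 => (if l = i then (1:ℂ) else 0) * Ψ ‖z - y‖) x :=
      ((hasFDerivAt_radial y x hxy (h1 _ hr)).const_mul _).differentiableAt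
    rw [pd_add l hd1 hd2, pd_radial_mul2 y x hxy h2 l l i]
    have hcm : pd l (fun z : V3 => (if l = i then (1:ℂ) else 0) * Ψ ‖z - y‖) x
        = (if l = i then (1:ℂ) else 0) * pd l (fun z : V3 => Ψ ‖z - y‖) x := by
      unfold pd
      rw [fderiv_const_mul (hasFDerivAt_radial y x hxy (h1 _ hr)).differentiableAt]
      split_ifs <;> simp
    rw [hcm, pd_radial y x hxy (h1 _ hr) l]
    simp only [eq_self_iff_true, if_true]
    push_cast
    split_ifs <;> field_simp <;> ring
  rw [lap]
  rw [Finset.sum_congr rfl (fun l _ => key l), Finset.sum_add_distrib, Finset.sum_add_distrib,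
    ← Finset.mul_sum, sum_sq]
  simp only [Finset.sum_const, Finset.card_univ, Fintype.card_fin, nsmul_eq_mul, boole_mul,
    Finset.sum_ite_eq', Finset.mem_univ, if_true]
  field_simp
  ring

end AuxHelmholtz

/-- The pair `u = E₁₂(·,y)`, `p = E₂₂(·,y)` satisfies the Biot system of
linearized thermoelasticity away from the source point. -/
theorem stmt_16 (lam μ ρ ω κ η gam : ℝ) (hμ : 0 < μ) (hlam : 0 < lam + 2 * μ)
    (hρ : 0 < ρ) (hω : 0 < ω) (hκ : 0 < κ) (q kp k1 k2 : ℂ)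
    (hq : q = Complex.I * (ω : ℂ) / (κ : ℂ))
    (hkp : kp = ((ω * Real.sqrt (ρ / (lam + 2 * μ)) : ℝ) : ℂ))
    (hne : k1 ^ 2 ≠ k2 ^ 2)
    (hchar1 : k1 ^ 2 + k2 ^ 2
      = q * (1 + ((gam * η * κ / (lam + 2 * μ) : ℝ) : ℂ)) + kp ^ 2)
    (hchar2 : k1 ^ 2 * k2 ^ 2 = q * kp ^ 2)
    (y x : V3) (hxy : x ≠ y) :
    (∀ i : Fin 3,
      (μ : ℂ) * lap (fun z => E12 lam μ gam k1 k2 i z y) x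
        + ((lam : ℂ) + (μ : ℂ)) *
          pd i (fun z => ∑ l, pd l (fun w => E12 lam μ gam k1 k2 l w y) z) x
        + (ρ : ℂ) * (ω : ℂ) ^ 2 * E12 lam μ gam k1 k2 i x y
        - (gam : ℂ) * pd i (fun z => E22 kp k1 k2 z y) x = 0)
    ∧ lap (fun z => E22 kp k1 k2 z y) x + q * E22 kp k1 k2 x y
        + Complex.I * (ω : ℂ) * (η : ℂ) *
          (∑ l, pd l (fun w => E12 lam μ gam k1 k2 l w y) x) = 0 := by
  classical
  have hr : ‖x - y‖ ≠ 0 := norm_sub_ne x y hxy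
  have hrC : ((‖x - y‖ : ℝ) : ℂ) ≠ 0 := Complex.ofReal_ne_zero.mpr hr
  have hlmR : (lam + 2 * μ : ℝ) ≠ 0 := ne_of_gt hlam
  have hlm : ((lam : ℂ) + 2 * (μ : ℂ)) ≠ 0 := by
    have h0 : ((lam + 2 * μ : ℝ) : ℂ) ≠ 0 := Complex.ofReal_ne_zero.mpr hlmR
    push_cast at h0
    exact h0
  have hD : k1 ^ 2 - k2 ^ 2 ≠ 0 := sub_ne_zero.mpr hne
  have hκC : (κ : ℂ) ≠ 0 := Complex.ofReal_ne_zero.mpr (ne_of_gt hκ)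
  have hxmem : x ∈ ({y}ᶜ : Set V3) := by simpa using hxy
  have hgamma : ∀ (k : ℂ) (z : V3), gammaK k z y = FF k ‖z - y‖ := by
    intro k z
    rw [gammaK, FF]
    norm_cast
  set c : ℂ := -((gam : ℂ) / ((k1 ^ 2 - k2 ^ 2) * ((lam : ℂ) + 2 * (μ : ℂ)))) with hc
  -- derivative packages for the combined radial profiles
  have hdE : ∀ t : ℝ, t ≠ 0 → HasDerivAt (fun t => c * (AA k1 t - AA k2 t))
      ((t : ℂ) * (c * (BB k1 t - BB k2 t))) t := by
    intro t ht
    have := ((hAA k1 t ht).sub (hAA k2 t ht)).const_mul c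
    refine this.congr_deriv ?_
    ring
  have hdE2 : HasDerivAt (fun t => c * (BB k1 t - BB k2 t))
      (c * (BBd k1 ‖x - y‖ - BBd k2 ‖x - y‖)) ‖x - y‖ :=
    ((hBB k1 _ hr).sub (hBB k2 _ hr)).const_mul c
  -- E12 representation
  have hrepE : ∀ (j : Fin 3) (z : V3), z ≠ y → E12 lam μ gam k1 k2 j z y
      = (c * (AA k1 ‖z - y‖ - AA k2 ‖z - y‖)) * ((z j - y j : ℝ) : ℂ) := by
    intro j z hz
    have hnz : ‖z - y‖ ≠ 0 := norm_sub_ne z y hz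
    have hnzC : ((‖z - y‖ : ℝ) : ℂ) ≠ 0 := Complex.ofReal_ne_zero.mpr hnz
    rw [E12]
    have hfun : (fun w => gammaK k1 w y - gammaK k2 w y)
        = fun w : V3 => (fun t : ℝ => FF k1 t - FF k2 t) ‖w - y‖ := by
      funext w
      simp only [hgamma]
    rw [hfun]
    have hd : HasDerivAt (fun t : ℝ => FF k1 t - FF k2 t)
        (((‖z - y‖ : ℝ) : ℂ) * (AA k1 ‖z - y‖ - AA k2 ‖z - y‖)) ‖z - y‖ := by
      have := (hFF k1 _ hnz).sub (hFF k2 _ hnz)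
      refine this.congr_deriv ?_
      ring
    rw [pd_radial' y z hz hd j, hc]
    ring
  -- divergence representation
  have hrepDiv : ∀ z : V3, z ≠ y →
      (∑ l, pd l (fun w => E12 lam μ gam k1 k2 l w y) z)
      = c * (-(k1 ^ 2) * FF k1 ‖z - y‖ + k2 ^ 2 * FF k2 ‖z - y‖) := by
    intro z hz
    have hnz : ‖z - y‖ ≠ 0 := norm_sub_ne z y hz
    have hnzC : ((‖z - y‖ : ℝ) : ℂ) ≠ 0 := Complex.ofReal_ne_zero.mpr hnz
    have hzmem : z ∈ ({y}ᶜ : Set V3) := by simpa using hz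
    have key : ∀ l : Fin 3, pd l (fun w => E12 lam μ gam k1 k2 l w y) z
        = (c * (BB k1 ‖z - y‖ - BB k2 ‖z - y‖))
            * (((z l - y l : ℝ) : ℂ) * ((z l - y l : ℝ) : ℂ))
          + c * (AA k1 ‖z - y‖ - AA k2 ‖z - y‖) := by
      intro l
      have congr1 : pd l (fun w => E12 lam μ gam k1 k2 l w y) z
          = pd l (fun w => (fun t : ℝ => c * (AA k1 t - AA k2 t)) ‖w - y‖
              * ((w l - y l : ℝ) : ℂ)) z := by
        apply pd_congr l isOpen_compl_singleton hzmem
        intro w hw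
        exact hrepE l w (by simpa using hw)
      rw [congr1, pd_radial_mul y z hz (hdE _ hnz) l l]
      simp only [eq_self_iff_true, if_true]
      push_cast
      field_simp
    rw [Finset.sum_congr rfl (fun l _ => key l), Finset.sum_add_distrib, ← Finset.mul_sum,
      sum_sq z y]
    simp only [Finset.sum_const, Finset.card_univ, Fintype.card_fin, nsmul_eq_mul]
    have e1 := id1 k1 ‖z - y‖ hnz
    have e2 := id1 k2 ‖z - y‖ hnz
    linear_combination c * e1 - c * e2
  -- E22 representation
  have hrepP : ∀ z : V3, E22 kp k1 k2 z y
      = (fun t : ℝ => -(1 / (k1 ^ 2 - k2 ^ 2))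
          * ((kp ^ 2 - k1 ^ 2) * FF k1 t - (kp ^ 2 - k2 ^ 2) * FF k2 t)) ‖z - y‖ := by
    intro z
    rw [E22]
    simp only [hgamma]
  have hdP : ∀ t : ℝ, t ≠ 0 → HasDerivAt
      (fun t : ℝ => -(1 / (k1 ^ 2 - k2 ^ 2))
          * ((kp ^ 2 - k1 ^ 2) * FF k1 t - (kp ^ 2 - k2 ^ 2) * FF k2 t))
      ((t : ℂ) * (-(1 / (k1 ^ 2 - k2 ^ 2))
          * ((kp ^ 2 - k1 ^ 2) * AA k1 t - (kp ^ 2 - k2 ^ 2) * AA k2 t))) t := by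
    intro t ht
    have := (((hFF k1 t ht).const_mul (kp ^ 2 - k1 ^ 2)).sub
      ((hFF k2 t ht).const_mul (kp ^ 2 - k2 ^ 2))).const_mul (-(1 / (k1 ^ 2 - k2 ^ 2)))
    refine this.congr_deriv ?_
    ring
  have hdP2 : HasDerivAt
      (fun t : ℝ => -(1 / (k1 ^ 2 - k2 ^ 2))
          * ((kp ^ 2 - k1 ^ 2) * AA k1 t - (kp ^ 2 - k2 ^ 2) * AA k2 t))
      (-(1 / (k1 ^ 2 - k2 ^ 2)) * ((kp ^ 2 - k1 ^ 2) * ((‖x - y‖ : ℂ) * BB k1 ‖x - y‖)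
          - (kp ^ 2 - k2 ^ 2) * ((‖x - y‖ : ℂ) * BB k2 ‖x - y‖))) ‖x - y‖ :=
    (((hAA k1 _ hr).const_mul (kp ^ 2 - k1 ^ 2)).sub
      ((hAA k2 _ hr).const_mul (kp ^ 2 - k2 ^ 2))).const_mul (-(1 / (k1 ^ 2 - k2 ^ 2)))
  -- kp^2 relation
  have hkp2 : kp ^ 2 * ((lam : ℂ) + 2 * (μ : ℂ)) = (ρ : ℂ) * (ω : ℂ) ^ 2 := by
    have hs : Real.sqrt (ρ / (lam + 2 * μ)) ^ 2 = ρ / (lam + 2 * μ) :=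
      Real.sq_sqrt (by positivity)
    have h2 : ((ω * Real.sqrt (ρ / (lam + 2 * μ)) : ℝ)) ^ 2 = ω ^ 2 * (ρ / (lam + 2 * μ)) := by
      rw [mul_pow, hs]
    rw [hkp, ← Complex.ofReal_pow, h2]
    push_cast
    field_simp
  have hc2 : c = -((gam : ℂ) * (k1 ^ 2 - k2 ^ 2)⁻¹ * ((lam : ℂ) + 2 * (μ : ℂ))⁻¹) := by
    rw [hc, div_eq_mul_inv, mul_inv]
    ring
  -- main computations at x
  constructor
  · intro i
    have hlapU : lap (fun z => E12 lam μ gam k1 k2 i z y) x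
        = c * (-(k1 ^ 2) * AA k1 ‖x - y‖ + k2 ^ 2 * AA k2 ‖x - y‖)
            * ((x i - y i : ℝ) : ℂ) := by
      have hcongr : lap (fun z => E12 lam μ gam k1 k2 i z y) x
          = lap (fun z => (fun t : ℝ => c * (AA k1 t - AA k2 t)) ‖z - y‖
              * ((z i - y i : ℝ) : ℂ)) x := by
        apply lap_congr isOpen_compl_singleton hxmem
        intro z hz
        exact hrepE i z (by simpa using hz)
      rw [hcongr, lap_radial_mul y x hxy _ _ _ i hdE hdE2]
      have e1 := id2 k1 ‖x - y‖ hr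
      have e2 := id2 k2 ‖x - y‖ hr
      linear_combination (((x i - y i : ℝ) : ℂ)) * c * e1 - (((x i - y i : ℝ) : ℂ)) * c * e2
    have hpdDiv : pd i (fun z => ∑ l, pd l (fun w => E12 lam μ gam k1 k2 l w y) z) x
        = c * (-(k1 ^ 2) * AA k1 ‖x - y‖ + k2 ^ 2 * AA k2 ‖x - y‖)
            * ((x i - y i : ℝ) : ℂ) := by
      have hcongr : pd i (fun z => ∑ l, pd l (fun w => E12 lam μ gam k1 k2 l w y) z) x
          = pd i (fun z => (fun t : ℝ => c * (-(k1 ^ 2) * FF k1 t + k2 ^ 2 * FF k2 t))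
              ‖z - y‖) x := by
        apply pd_congr i isOpen_compl_singleton hxmem
        intro z hz
        exact hrepDiv z (by simpa using hz)
      have hd : HasDerivAt (fun t : ℝ => c * (-(k1 ^ 2) * FF k1 t + k2 ^ 2 * FF k2 t))
          (((‖x - y‖ : ℝ) : ℂ) * (c * (-(k1 ^ 2) * AA k1 ‖x - y‖ + k2 ^ 2 * AA k2 ‖x - y‖)))
          ‖x - y‖ := by
        have := (((hFF k1 _ hr).const_mul (-(k1 ^ 2))).add
          ((hFF k2 _ hr).const_mul (k2 ^ 2))).const_mul c
        refine this.congr_deriv ?_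
        ring
      rw [hcongr, pd_radial' y x hxy hd i]
    have hU : E12 lam μ gam k1 k2 i x y
        = (c * (AA k1 ‖x - y‖ - AA k2 ‖x - y‖)) * ((x i - y i : ℝ) : ℂ) := hrepE i x hxy
    have hpdP : pd i (fun z => E22 kp k1 k2 z y) x
        = (-(1 / (k1 ^ 2 - k2 ^ 2)) * ((kp ^ 2 - k1 ^ 2) * AA k1 ‖x - y‖
            - (kp ^ 2 - k2 ^ 2) * AA k2 ‖x - y‖)) * ((x i - y i : ℝ) : ℂ) := by
      have hcongr : pd i (fun z => E22 kp k1 k2 z y) x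
          = pd i (fun z => (fun t : ℝ => -(1 / (k1 ^ 2 - k2 ^ 2))
              * ((kp ^ 2 - k1 ^ 2) * FF k1 t - (kp ^ 2 - k2 ^ 2) * FF k2 t)) ‖z - y‖) x := by
        apply pd_congr i isOpen_compl_singleton hxmem
        intro z _
        exact hrepP z
      rw [hcongr, pd_radial' y x hxy (hdP _ hr) i]
    have hLl : ((lam : ℂ) + 2 * (μ : ℂ)) * ((lam : ℂ) + 2 * (μ : ℂ))⁻¹ = 1 :=
      mul_inv_cancel₀ hlm
    rw [hlapU, hpdDiv, hU, hpdP, hc2]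
    linear_combination
      (-(gam : ℂ) * (k1 ^ 2 - k2 ^ 2)⁻¹ * ((-(k1 ^ 2) * AA k1 ‖x - y‖ + k2 ^ 2 * AA k2 ‖x - y‖)
          + kp ^ 2 * (AA k1 ‖x - y‖ - AA k2 ‖x - y‖)) * ((x i - y i : ℝ) : ℂ)) * hLl
      + ((gam : ℂ) * (k1 ^ 2 - k2 ^ 2)⁻¹ * ((lam : ℂ) + 2 * (μ : ℂ))⁻¹
          * (AA k1 ‖x - y‖ - AA k2 ‖x - y‖) * ((x i - y i : ℝ) : ℂ)) * hkp2
  · have hlapP : lap (fun z => E22 kp k1 k2 z y) x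
        = -(1 / (k1 ^ 2 - k2 ^ 2)) * ((kp ^ 2 - k1 ^ 2) * (-(k1 ^ 2) * FF k1 ‖x - y‖)
            - (kp ^ 2 - k2 ^ 2) * (-(k2 ^ 2) * FF k2 ‖x - y‖)) := by
      have hcongr : lap (fun z => E22 kp k1 k2 z y) x
          = lap (fun z => (fun t : ℝ => -(1 / (k1 ^ 2 - k2 ^ 2))
              * ((kp ^ 2 - k1 ^ 2) * FF k1 t - (kp ^ 2 - k2 ^ 2) * FF k2 t)) ‖z - y‖) x := by
        apply lap_congr isOpen_compl_singleton hxmem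
        intro z _
        exact hrepP z
      rw [hcongr, lap_radial y x hxy _ _ _ hdP hdP2]
      have e1 := id1 k1 ‖x - y‖ hr
      have e2 := id1 k2 ‖x - y‖ hr
      linear_combination (-(1 / (k1 ^ 2 - k2 ^ 2)) * (kp ^ 2 - k1 ^ 2)) * e1
        - (-(1 / (k1 ^ 2 - k2 ^ 2)) * (kp ^ 2 - k2 ^ 2)) * e2
    have hPx : E22 kp k1 k2 x y = -(1 / (k1 ^ 2 - k2 ^ 2))
        * ((kp ^ 2 - k1 ^ 2) * FF k1 ‖x - y‖ - (kp ^ 2 - k2 ^ 2) * FF k2 ‖x - y‖) := hrepP x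
    have hIω : Complex.I * (ω : ℂ) = q * (κ : ℂ) := by
      rw [hq]
      field_simp
    have hε : ((gam * η * κ / (lam + 2 * μ) : ℝ) : ℂ)
        = (gam : ℂ) * (η : ℂ) * (κ : ℂ) / ((lam : ℂ) + 2 * (μ : ℂ)) := by
      push_cast
      ring
    rw [hε] at hchar1
    rw [hlapP, hPx, hrepDiv x hxy, hc2]
    linear_combination (1 / (k1 ^ 2 - k2 ^ 2)) * (FF k1 ‖x - y‖ - FF k2 ‖x - y‖) * hchar2
      - (1 / (k1 ^ 2 - k2 ^ 2)) * (k1 ^ 2 * FF k1 ‖x - y‖ - k2 ^ 2 * FF k2 ‖x - y‖) * hchar1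
      + ((η : ℂ) * (-((gam : ℂ) * (k1 ^ 2 - k2 ^ 2)⁻¹ * ((lam : ℂ) + 2 * (μ : ℂ))⁻¹))
          * (-(k1 ^ 2) * FF k1 ‖x - y‖ + k2 ^ 2 * FF k2 ‖x - y‖)) * hIω
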